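/- Let Ω be an open subset of ℝ^P, let F : Ω → ℝ^{M×N} be entrywise C² with the columns of F(x) spanning ℝ^M for every x ∈ Ω, and let w ∈ ℝ^N. Define E(x) := ‖Π(x)w‖² where Π(x) := I − Fᵀ(x)(F(x)Fᵀ(x))⁻¹F(x), Π_p(x) := Fᵀ(x)(F(x)Fᵀ(x))⁻¹ (∂F/∂x_p)(x), and Π_{q,p}(x) := Fᵀ(x)(F(x)Fᵀ(x))⁻¹ (∂²F/∂x_q∂x_p)(x). Then for all p, q = 1,…,P and every x ∈ Ω, the second partial derivative of E is ∂²E/∂x_q∂x_p(x) = 2⟨w, (Π_p(x)Π_q(x) + Π_q(x)Π_p(x))Π(x)w⟩ + 2⟨Π(x)Π_p(x)ᵀw, Π(x)Π_q(x)ᵀw⟩ − 2⟨Π_q(x)Π(x)w, Π_p(x)Π(x)w⟩ − 2⟨w, Π_{q,p}(x)Π(x)w⟩. -/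

import Mathlib

open Matrix

/-- Entrywise partial derivative of a matrix-valued function with respect to the `p`-th
coordinate. -/
noncomputable def matPartialDeriv {P M N : ℕ} (F : (Fin P → ℝ) → Matrix (Fin M) (Fin N) ℝ)
    (p : Fin P) (x : Fin P → ℝ) : Matrix (Fin M) (Fin N) ℝ :=
  Matrix.of fun i j => fderiv ℝ (fun y => F y i j) x (Pi.single p 1)

/-- `Π(x) := I − Fᵀ(x)(F(x)Fᵀ(x))⁻¹F(x)`. -/
noncomputable def projMat {P M N : ℕ} (F : (Fin P → ℝ) → Matrix (Fin M) (Fin N) ℝ)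
    (x : Fin P → ℝ) : Matrix (Fin N) (Fin N) ℝ :=
  1 - (F x)ᵀ * (F x * (F x)ᵀ)⁻¹ * F x

/-- `Π_p(x) := Fᵀ(x)(F(x)Fᵀ(x))⁻¹ (∂F/∂x_p)(x)`. -/
noncomputable def projMatP {P M N : ℕ} (F : (Fin P → ℝ) → Matrix (Fin M) (Fin N) ℝ)
    (p : Fin P) (x : Fin P → ℝ) : Matrix (Fin N) (Fin N) ℝ :=
  (F x)ᵀ * (F x * (F x)ᵀ)⁻¹ * matPartialDeriv F p x

/-- `Π_{q,p}(x) := Fᵀ(x)(F(x)Fᵀ(x))⁻¹ (∂²F/∂x_q∂x_p)(x)`. -/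
noncomputable def projMatQP {P M N : ℕ} (F : (Fin P → ℝ) → Matrix (Fin M) (Fin N) ℝ)
    (q p : Fin P) (x : Fin P → ℝ) : Matrix (Fin N) (Fin N) ℝ :=
  (F x)ᵀ * (F x * (F x)ᵀ)⁻¹ * matPartialDeriv (matPartialDeriv F p) q x

/-! With `A⁺ := Fᵀ(FFᵀ)⁻¹` one has `Π = 1 - A⁺F`, a symmetric idempotent with `ΠA⁺ = 0`, so
`E = ⟨w, Πw⟩` on `Ω`. The derivative of the matrix inverse gives
`∂_q A⁺ = Π (∂_q F)ᵀ (FFᵀ)⁻¹ - Π_q A⁺`, hence `∂_p Π = -(Π_p Π + Π Π_pᵀ)` and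
`∂_q Π_p = Π Π_qᵀ Π_p - Π_q Π_p + Π_{q,p}`. Thus `∂_p E = -2⟨w, Π_p Π w⟩`, and differentiating
once more the formula follows from `Πᵀ = Π = Π²`. -/

namespace Matrix

section QuadraticForms

variable {n R : Type*} [Fintype n] [CommRing R]

theorem mulVec_dotProduct_mulVec {l m : Type*} [Fintype l] [Fintype m] (A : Matrix l n R)
    (B : Matrix l m R) (u : n → R) (v : m → R) :
    (A *ᵥ u) ⬝ᵥ (B *ᵥ v) = u ⬝ᵥ ((Aᵀ * B) *ᵥ v) := by
  rw [dotProduct_mulVec, vecMul_mulVec, ← dotProduct_mulVec]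

variable {Q : Matrix n n R} (hs : Q.IsSymm) (hi : IsIdempotentElem Q)
include hs hi

theorem IsSymm.mulVec_dotProduct_mulVec_self (w : n → R) :
    (Q *ᵥ w) ⬝ᵥ (Q *ᵥ w) = w ⬝ᵥ (Q *ᵥ w) := by
  rw [mulVec_dotProduct_mulVec, hs.eq, hi.eq]

theorem IsSymm.neg_two_mul_dotProduct_mulVec_eq (A B C : Matrix n n R) (w : n → R) :
    -2 * (w ⬝ᵥ (((Q * Bᵀ * A - B * A + C) * Q + A * -(B * Q + Q * Bᵀ)) *ᵥ w))
      = 2 * (w ⬝ᵥ ((A * B + B * A) *ᵥ (Q *ᵥ w))) + 2 * ((Q *ᵥ (Aᵀ *ᵥ w)) ⬝ᵥ (Q *ᵥ (Bᵀ *ᵥ w)))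
        - 2 * ((B *ᵥ (Q *ᵥ w)) ⬝ᵥ (A *ᵥ (Q *ᵥ w))) - 2 * (w ⬝ᵥ (C *ᵥ (Q *ᵥ w))) := by
  have hi' (X : Matrix n n R) : Q * (Q * X) = Q * X := by rw [← Matrix.mul_assoc, hi.eq]
  simp only [mulVec_mulVec, mulVec_dotProduct_mulVec, transpose_mul, transpose_transpose, hs.eq,
    Matrix.mul_assoc, hi', Matrix.add_mul, Matrix.mul_add, Matrix.sub_mul, Matrix.mul_neg,
    add_mulVec, sub_mulVec, neg_mulVec, dotProduct_add, dotProduct_sub, dotProduct_neg]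
  ring

end QuadraticForms

section PseudoInverse

variable {m n R : Type*} [Fintype m] [DecidableEq m] [Fintype n] [CommRing R]

/-- For `A` of full row rank this is the Moore–Penrose pseudo-inverse `A⁺`; in this notation
`projMat F x = 1 - A⁺A` and `projMatP F p x = A⁺ ∂_p F` with `A = F x`. -/
noncomputable def pinv (A : Matrix m n R) : Matrix n m R := Aᵀ * (A * Aᵀ)⁻¹

theorem transpose_pinv (A : Matrix m n R) : (pinv A)ᵀ = (A * Aᵀ)⁻¹ * A := by
  rw [pinv, transpose_mul, transpose_nonsing_inv, transpose_mul, transpose_transpose]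

theorem isSymm_one_sub_pinv_mul [DecidableEq n] (A : Matrix m n R) :
    (1 - pinv A * A).IsSymm := by
  rw [IsSymm, transpose_sub, transpose_one, transpose_mul, transpose_pinv, pinv, Matrix.mul_assoc]

variable {A : Matrix m n R} (h : IsUnit (A * Aᵀ).det)
include h

theorem mul_pinv : A * pinv A = 1 := by
  rw [pinv, ← Matrix.mul_assoc, mul_nonsing_inv _ h]

theorem transpose_pinv_mul_pinv : (pinv A)ᵀ * pinv A = (A * Aᵀ)⁻¹ := by
  rw [transpose_pinv, Matrix.mul_assoc, mul_pinv h, Matrix.mul_one]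

theorem one_sub_pinv_mul_mul_pinv [DecidableEq n] : (1 - pinv A * A) * pinv A = 0 := by
  rw [Matrix.sub_mul, Matrix.one_mul, Matrix.mul_assoc, mul_pinv h, Matrix.mul_one, sub_self]

theorem isIdempotentElem_one_sub_pinv_mul [DecidableEq n] :
    IsIdempotentElem (1 - pinv A * A) := by
  rw [IsIdempotentElem, Matrix.mul_sub, Matrix.mul_one, ← Matrix.mul_assoc,
    one_sub_pinv_mul_mul_pinv h, Matrix.zero_mul, sub_zero]

end PseudoInverse

theorem isUnit_det_mul_transpose_of_span_col_eq_top {m n : Type*} [Fintype m] [DecidableEq m]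
    [Fintype n] {A : Matrix m n ℝ} (h : Submodule.span ℝ (Set.range A.col) = ⊤) :
    IsUnit (A * Aᵀ).det := by
  have hsurj : Function.Surjective A.mulVec := by
    rw [← coe_mulVecLin, ← LinearMap.range_eq_top, range_mulVecLin, h]
  have hinj : Function.Injective A.vecMul := fun u v huv => by
    obtain ⟨x, hx⟩ := hsurj (u - v)
    have : (u - v) ⬝ᵥ (A *ᵥ x) = 0 := by
      rw [dotProduct_mulVec, sub_vecMul, sub_eq_zero.2 huv, zero_dotProduct]
    rw [hx] at this
    exact sub_eq_zero.1 (dotProduct_self_eq_zero.1 this)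
  rw [← isUnit_iff_isUnit_det, ← conjTranspose_eq_transpose_of_trivial]
  exact (PosDef.mul_conjTranspose_self A hinj).isUnit

end Matrix

/-- `Matrix` carries no global norm, so differentiability is taken entrywise, like
`matPartialDeriv`. -/
def EntrywiseDifferentiableAt {P m n : ℕ} (Φ : (Fin P → ℝ) → Matrix (Fin m) (Fin n) ℝ)
    (z : Fin P → ℝ) : Prop :=
  ∀ i j, DifferentiableAt ℝ (fun y => Φ y i j) z

section EntrywiseCalculus

variable {P l m n : ℕ} {z : Fin P → ℝ} {Φ : (Fin P → ℝ) → Matrix (Fin l) (Fin m) ℝ}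
  {Ψ : (Fin P → ℝ) → Matrix (Fin m) (Fin n) ℝ}

theorem EntrywiseDifferentiableAt.transpose (hΦ : EntrywiseDifferentiableAt Φ z) :
    EntrywiseDifferentiableAt (fun y => (Φ y)ᵀ) z :=
  fun i j => hΦ j i

theorem EntrywiseDifferentiableAt.mul (hΦ : EntrywiseDifferentiableAt Φ z)
    (hΨ : EntrywiseDifferentiableAt Ψ z) : EntrywiseDifferentiableAt (fun y => Φ y * Ψ y) z :=
  fun i j => by
    simp only [Matrix.mul_apply]
    exact DifferentiableAt.fun_sum fun k _ => (hΦ i k).mul (hΨ k j)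

theorem EntrywiseDifferentiableAt.one_sub {Φ : (Fin P → ℝ) → Matrix (Fin m) (Fin m) ℝ}
    (hΦ : EntrywiseDifferentiableAt Φ z) : EntrywiseDifferentiableAt (fun y => 1 - Φ y) z :=
  fun i j => by simpa only [Matrix.sub_apply] using (hΦ i j).const_sub _

theorem EntrywiseDifferentiableAt.dotProduct_mulVec (hΦ : EntrywiseDifferentiableAt Φ z)
    (v : Fin l → ℝ) (w : Fin m → ℝ) : DifferentiableAt ℝ (fun y => v ⬝ᵥ (Φ y *ᵥ w)) z := by
  simp only [dotProduct, mulVec]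
  exact .fun_sum fun i _ => .const_mul (.fun_sum fun j _ => (hΦ i j).mul_const _) _

theorem matPartialDeriv_transpose (Φ : (Fin P → ℝ) → Matrix (Fin l) (Fin m) ℝ) (p : Fin P) :
    matPartialDeriv (fun y => (Φ y)ᵀ) p z = (matPartialDeriv Φ p z)ᵀ :=
  rfl

theorem matPartialDeriv_one_sub (Φ : (Fin P → ℝ) → Matrix (Fin m) (Fin m) ℝ) (p : Fin P) :
    matPartialDeriv (fun y => 1 - Φ y) p z = -matPartialDeriv Φ p z := by
  ext i j
  simp [matPartialDeriv, fderiv_const_sub]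

theorem matPartialDeriv_mul (hΦ : EntrywiseDifferentiableAt Φ z)
    (hΨ : EntrywiseDifferentiableAt Ψ z) (p : Fin P) :
    matPartialDeriv (fun y => Φ y * Ψ y) p z
      = matPartialDeriv Φ p z * Ψ z + Φ z * matPartialDeriv Ψ p z := by
  ext i j
  have h k : DifferentiableAt ℝ (fun y => Φ y i k * Ψ y k j) z := (hΦ i k).mul (hΨ k j)
  simp only [matPartialDeriv, Matrix.of_apply, Matrix.mul_apply, Matrix.add_apply]
  rw [fderiv_fun_sum fun k _ => h k]
  simp [fderiv_fun_mul (hΦ _ _) (hΨ _ _), Finset.sum_add_distrib, mul_comm, add_comm]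

theorem fderiv_dotProduct_mulVec (hΦ : EntrywiseDifferentiableAt Φ z) (v : Fin l → ℝ)
    (w : Fin m → ℝ) (p : Fin P) :
    fderiv ℝ (fun y => v ⬝ᵥ (Φ y *ᵥ w)) z (Pi.single p 1)
      = v ⬝ᵥ (matPartialDeriv Φ p z *ᵥ w) := by
  have h : HasFDerivAt (fun y => ∑ i, ∑ j, v i * w j * Φ y i j)
      (∑ i, ∑ j, (v i * w j) • fderiv ℝ (fun y => Φ y i j) z) z :=
    .fun_sum fun i _ => .fun_sum fun j _ => (hΦ i j).hasFDerivAt.const_mul _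
  have hE : (fun y => v ⬝ᵥ (Φ y *ᵥ w)) = fun y => ∑ i, ∑ j, v i * w j * Φ y i j := by
    ext y; simp only [dotProduct, mulVec, Finset.mul_sum]; congr! 2; ring
  rw [hE, h.fderiv]
  simp only [_root_.sum_apply, _root_.smul_apply, smul_eq_mul, dotProduct, mulVec,
    matPartialDeriv, Matrix.of_apply, Finset.mul_sum]
  congr! 2; ring

end EntrywiseCalculus

section MatrixInverse

attribute [local instance] Matrix.linftyOpNormedAddCommGroup Matrix.linftyOpNormedSpace
  Matrix.linftyOpNormedRing Matrix.linftyOpNormedAlgebra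

variable {P n : ℕ} {z : Fin P → ℝ} {Φ : (Fin P → ℝ) → Matrix (Fin n) (Fin n) ℝ}

-- The `L∞` operator norm makes square matrices a normed algebra, so `hasFDerivAt_ringInverse`
-- applies.
theorem exists_hasFDerivAt_inv_apply (hΦ : EntrywiseDifferentiableAt Φ z)
    (hu : IsUnit (Φ z).det) (i j : Fin n) :
    ∃ ℓ : (Fin P → ℝ) →L[ℝ] ℝ, HasFDerivAt (fun y => (Φ y)⁻¹ i j) ℓ z ∧
      ∀ p, ℓ (Pi.single p 1) = (-((Φ z)⁻¹ * matPartialDeriv Φ p z * (Φ z)⁻¹)) i j := by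
  let toMatrix : (Fin n → Fin n → ℝ) →L[ℝ] Matrix (Fin n) (Fin n) ℝ :=
    (ofLinearEquiv ℝ).toLinearMap.toContinuousLinearMap
  have hΦ' : HasFDerivAt Φ (toMatrix.comp (.pi fun i => .pi fun j => fderiv ℝ (Φ · i j) z)) z :=
    toMatrix.hasFDerivAt.comp z
      (hasFDerivAt_pi.2 fun i => hasFDerivAt_pi.2 fun j => (hΦ i j).hasFDerivAt)
  have hu' := (isUnit_iff_isUnit_det _).2 hu
  have hinv := hasFDerivAt_ringInverse (𝕜 := ℝ) hu'.unit
  rw [← Ring.inverse_unit, hu'.unit_spec, ← nonsing_inv_eq_ringInverse] at hinv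
  have hcomp := hinv.comp z hΦ'
  simp only [Function.comp_def, ← nonsing_inv_eq_ringInverse] at hcomp
  exact ⟨_, (entryLinearMap ℝ ℝ i j).toContinuousLinearMap.hasFDerivAt.comp z hcomp,
    fun p => rfl⟩

theorem EntrywiseDifferentiableAt.inv (hΦ : EntrywiseDifferentiableAt Φ z)
    (hu : IsUnit (Φ z).det) : EntrywiseDifferentiableAt (fun y => (Φ y)⁻¹) z := fun i j =>
  (exists_hasFDerivAt_inv_apply hΦ hu i j).choose_spec.1.differentiableAt

theorem matPartialDeriv_inv (hΦ : EntrywiseDifferentiableAt Φ z) (hu : IsUnit (Φ z).det)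
    (p : Fin P) :
    matPartialDeriv (fun y => (Φ y)⁻¹) p z = -((Φ z)⁻¹ * matPartialDeriv Φ p z * (Φ z)⁻¹) := by
  ext i j
  obtain ⟨ℓ, hℓ, hℓp⟩ := exists_hasFDerivAt_inv_apply hΦ hu i j
  rw [← hℓp, ← hℓ.fderiv]
  rfl

end MatrixInverse

section ProjectorCalculus

variable {P M N : ℕ} {F : (Fin P → ℝ) → Matrix (Fin M) (Fin N) ℝ} {z : Fin P → ℝ}

theorem projMat_eq : projMat F z = 1 - pinv (F z) * F z := rfl

theorem projMatP_eq (p : Fin P) : projMatP F p z = pinv (F z) * matPartialDeriv F p z := rfl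

theorem projMatQP_eq (q p : Fin P) :
    projMatQP F q p z = pinv (F z) * matPartialDeriv (matPartialDeriv F p) q z := rfl

variable (hF : EntrywiseDifferentiableAt F z) (hu : IsUnit (F z * (F z)ᵀ).det)
include hF hu

theorem EntrywiseDifferentiableAt.pinv : EntrywiseDifferentiableAt (fun y => pinv (F y)) z :=
  hF.transpose.mul ((hF.mul hF.transpose).inv hu)

theorem EntrywiseDifferentiableAt.projMat : EntrywiseDifferentiableAt (projMat F) z :=
  ((hF.pinv hu).mul hF).one_sub

theorem matPartialDeriv_pinv (p : Fin P) :
    matPartialDeriv (fun y => pinv (F y)) p z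
      = projMat F z * (matPartialDeriv F p z)ᵀ * (F z * (F z)ᵀ)⁻¹
        - projMatP F p z * pinv (F z) := by
  have hG := hF.mul hF.transpose
  change matPartialDeriv (fun y => (F y)ᵀ * (F y * (F y)ᵀ)⁻¹) p z = _
  rw [matPartialDeriv_mul hF.transpose (hG.inv hu), matPartialDeriv_transpose,
    matPartialDeriv_inv hG hu, matPartialDeriv_mul hF hF.transpose, matPartialDeriv_transpose]
  simp only [projMat, projMatP, pinv, Matrix.mul_add, Matrix.add_mul, Matrix.sub_mul,
    Matrix.mul_neg, Matrix.one_mul, Matrix.mul_assoc]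
  abel

theorem matPartialDeriv_projMat (p : Fin P) :
    matPartialDeriv (projMat F) p z
      = -(projMatP F p z * projMat F z + projMat F z * (projMatP F p z)ᵀ) := by
  change matPartialDeriv (fun y => 1 - pinv (F y) * F y) p z = _
  rw [matPartialDeriv_one_sub, matPartialDeriv_mul (hF.pinv hu) hF, matPartialDeriv_pinv hF hu]
  simp only [projMat_eq, projMatP_eq, transpose_mul, transpose_pinv, Matrix.mul_sub,
    Matrix.sub_mul, Matrix.one_mul, Matrix.mul_one, Matrix.mul_assoc]
  abel

theorem matPartialDeriv_projMatP {p : Fin P}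
    (hF' : EntrywiseDifferentiableAt (matPartialDeriv F p) z) (q : Fin P) :
    matPartialDeriv (projMatP F p) q z
      = projMat F z * (projMatP F q z)ᵀ * projMatP F p z - projMatP F q z * projMatP F p z
        + projMatQP F q p z := by
  change matPartialDeriv (fun y => pinv (F y) * matPartialDeriv F p y) q z = _
  rw [matPartialDeriv_mul (hF.pinv hu) hF', matPartialDeriv_pinv hF hu]
  simp only [projMatP_eq, projMatQP_eq, transpose_mul, Matrix.mul_assoc]
  rw [← Matrix.mul_assoc (pinv (F z))ᵀ, transpose_pinv_mul_pinv hu]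
  simp only [Matrix.sub_mul, Matrix.mul_assoc]

end ProjectorCalculus

theorem fderiv_projMat_mulVec_dotProduct_self {P M N : ℕ}
    {F : (Fin P → ℝ) → Matrix (Fin M) (Fin N) ℝ} {z : Fin P → ℝ}
    (hF : EntrywiseDifferentiableAt F z) (hu : ∀ᶠ y in nhds z, IsUnit (F y * (F y)ᵀ).det)
    (w : Fin N → ℝ) (p : Fin P) :
    fderiv ℝ (fun y => (projMat F y *ᵥ w) ⬝ᵥ (projMat F y *ᵥ w)) z (Pi.single p 1)
      = -2 * (w ⬝ᵥ ((projMatP F p z * projMat F z) *ᵥ w)) := by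
  have hE : (fun y => (projMat F y *ᵥ w) ⬝ᵥ (projMat F y *ᵥ w))
      =ᶠ[nhds z] fun y => w ⬝ᵥ (projMat F y *ᵥ w) :=
    hu.mono fun y hy => (isSymm_one_sub_pinv_mul _).mulVec_dotProduct_mulVec_self
      (isIdempotentElem_one_sub_pinv_mul hy) w
  rw [hE.fderiv_eq, fderiv_dotProduct_mulVec (hF.projMat hu.self_of_nhds),
    matPartialDeriv_projMat hF hu.self_of_nhds]
  have hsymm : projMat F z * (projMatP F p z)ᵀ = (projMatP F p z * projMat F z)ᵀ := by
    rw [transpose_mul, projMat_eq, (isSymm_one_sub_pinv_mul _).eq]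
  rw [hsymm, neg_mulVec, add_mulVec, dotProduct_neg, dotProduct_add, dotProduct_transpose_mulVec]
  ring

theorem entrywiseDifferentiableAt_of_contDiffOn {P M N : ℕ} {Ω : Set (Fin P → ℝ)}
    {F : (Fin P → ℝ) → Matrix (Fin M) (Fin N) ℝ} {k : WithTop ℕ∞} (hk : 1 ≤ k) (hΩ : IsOpen Ω)
    (hF : ∀ i j, ContDiffOn ℝ k (fun x => F x i j) Ω) {z : Fin P → ℝ} (hz : z ∈ Ω) :
    EntrywiseDifferentiableAt F z := fun i j =>
  ((hF i j).differentiableOn (zero_lt_one.trans_le hk).ne' z hz).differentiableAt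
    (hΩ.mem_nhds hz)

theorem entrywiseDifferentiableAt_matPartialDeriv_of_contDiffOn {P M N : ℕ}
    {Ω : Set (Fin P → ℝ)} {F : (Fin P → ℝ) → Matrix (Fin M) (Fin N) ℝ} {k : WithTop ℕ∞}
    (hk : 2 ≤ k) (hΩ : IsOpen Ω) (hF : ∀ i j, ContDiffOn ℝ k (fun x => F x i j) Ω)
    {z : Fin P → ℝ} (hz : z ∈ Ω) (p : Fin P) :
    EntrywiseDifferentiableAt (matPartialDeriv F p) z := fun i j =>
  have hdF : ContDiffOn ℝ 1 (fderiv ℝ (fun x => F x i j)) Ω :=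
    (hF i j).fderiv_of_isOpen hΩ (by rwa [one_add_one_eq_two])
  ((hdF.differentiableOn one_ne_zero z hz).differentiableAt (hΩ.mem_nhds hz)).clm_apply
    (differentiableAt_const _)

/-- If `F : Ω → ℝ^{M×N}` is entrywise `C²` on an open `Ω ⊆ ℝ^P` with the
columns of `F(x)` spanning `ℝ^M` for all `x ∈ Ω`, and `w ∈ ℝ^N`, then the error function
`E(x) := ‖Π(x)w‖²` (squared Euclidean norm via the dot product) has second partial
derivatives
`∂²E/∂x_q∂x_p(x) = 2⟨w, (Π_pΠ_q + Π_qΠ_p)Πw⟩ + 2⟨ΠΠ_pᵀw, ΠΠ_qᵀw⟩ − 2⟨Π_qΠw, Π_pΠw⟩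
  − 2⟨w, Π_{q,p}Πw⟩` for all `p, q` and `x ∈ Ω`. -/
theorem stmt7 {P M N : ℕ} {Ω : Set (Fin P → ℝ)} (hΩ : IsOpen Ω)
    (F : (Fin P → ℝ) → Matrix (Fin M) (Fin N) ℝ)
    (hF : ∀ i j, ContDiffOn ℝ 2 (fun x => F x i j) Ω)
    (hspan : ∀ x ∈ Ω,
      Submodule.span ℝ (Set.range (fun n : Fin N => fun m : Fin M => F x m n)) = ⊤)
    (w : Fin N → ℝ) :
    ∀ x ∈ Ω, ∀ p q : Fin P,
      fderiv ℝ
        (fun z => fderiv ℝ (fun y => (projMat F y *ᵥ w) ⬝ᵥ (projMat F y *ᵥ w)) z (Pi.single p 1))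
        x (Pi.single q 1)
      = 2 * (w ⬝ᵥ ((projMatP F p x * projMatP F q x + projMatP F q x * projMatP F p x)
            *ᵥ (projMat F x *ᵥ w)))
        + 2 * ((projMat F x *ᵥ ((projMatP F p x)ᵀ *ᵥ w)) ⬝ᵥ
               (projMat F x *ᵥ ((projMatP F q x)ᵀ *ᵥ w)))
        - 2 * ((projMatP F q x *ᵥ (projMat F x *ᵥ w)) ⬝ᵥ
               (projMatP F p x *ᵥ (projMat F x *ᵥ w)))
        - 2 * (w ⬝ᵥ (projMatQP F q p x *ᵥ (projMat F x *ᵥ w))) := by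
  intro x hx p q
  have hFd : ∀ z ∈ Ω, EntrywiseDifferentiableAt F z := fun z =>
    entrywiseDifferentiableAt_of_contDiffOn one_le_two hΩ hF
  have hu : ∀ z ∈ Ω, IsUnit (F z * (F z)ᵀ).det := fun z hz =>
    isUnit_det_mul_transpose_of_span_col_eq_top (hspan z hz)
  have hE : (fun z => fderiv ℝ (fun y => (projMat F y *ᵥ w) ⬝ᵥ (projMat F y *ᵥ w)) z
      (Pi.single p 1)) =ᶠ[nhds x] fun z => -2 * (w ⬝ᵥ ((projMatP F p z * projMat F z) *ᵥ w)) := by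
    filter_upwards [hΩ.mem_nhds hx] with z hz
    exact fderiv_projMat_mulVec_dotProduct_self (hFd z hz)
      (Filter.mem_of_superset (hΩ.mem_nhds hz) hu) w p
  have hF' := entrywiseDifferentiableAt_matPartialDeriv_of_contDiffOn le_rfl hΩ hF hx p
  have hPp : EntrywiseDifferentiableAt (projMatP F p) x := ((hFd x hx).pinv (hu x hx)).mul hF'
  have hP := (hFd x hx).projMat (hu x hx)
  rw [hE.fderiv_eq, fderiv_const_mul ((hPp.mul hP).dotProduct_mulVec w w), _root_.smul_apply,
    smul_eq_mul, fderiv_dotProduct_mulVec (hPp.mul hP), matPartialDeriv_mul hPp hP,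
    matPartialDeriv_projMatP (hFd x hx) (hu x hx) hF', matPartialDeriv_projMat (hFd x hx) (hu x hx)]
  exact (isSymm_one_sub_pinv_mul _).neg_two_mul_dotProduct_mulVec_eq
    (isIdempotentElem_one_sub_pinv_mul (hu x hx)) _ _ _ w
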